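/- arXiv:2602.08875 — 10 statements merged into one kernel-verified Lean document; each statement's English description precedes it below -/
import Mathlib

section
/- Let (X,∗) be a quandle such that its dual rack X^op is commutative (i.e., R_y^{-1}(x) = R_x^{-1}(y) for all x,y). Then every left multiplication map is an involution: x∗(x∗y) = y for all x,y ∈ X. -/
/-- A cocommutative quandle has involutive left multiplications.
`ρ x y` denotes `R_y⁻¹(x)`, the dual operation. -/
theorem cocomm_quandle_left_involutive {X : Type*} (op ρ : X → X → X)
    (hidem : ∀ x : X, op x x = x)
    (hρ₁ : ∀ x y : X, op (ρ x y) y = x)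
    (hρ₂ : ∀ x y : X, ρ (op x y) y = x)
    (hsd : ∀ x y z : X, op (op y z) x = op (op y x) (op z x))
    (hcocomm : ∀ x y : X, ρ x y = ρ y x) :
    ∀ x y : X, op x (op x y) = y := by
  intro x y
  have h : ρ y (op x y) = x := by rw [← hcocomm]; exact hρ₂ x y
  have h2 := hρ₁ y (op x y)
  rwa [h] at h2
end

section
/- Let (X,∗) be a rack such that x∗(x∗y) = y for all x,y ∈ X. Then X is cocommutative: R_y^{-1}(x) = R_x^{-1}(y) for all x,y ∈ X. -/
/-- A rack with involutive left multiplications is cocommutative.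
`ρ x y` denotes `R_y⁻¹(x)`, the dual operation. -/
theorem left_involutive_rack_is_cocomm {X : Type*} (op ρ : X → X → X)
    (hρ₁ : ∀ x y : X, op (ρ x y) y = x)
    (hρ₂ : ∀ x y : X, ρ (op x y) y = x)
    (hsd : ∀ x y z : X, op (op y z) x = op (op y x) (op z x))
    (hinv : ∀ x y : X, op x (op x y) = y) :
    ∀ x y : X, ρ x y = ρ y x := by
  intro x y
  have h : op (ρ x y) x = y := by
    nth_rewrite 2 [← hρ₁ x y]
    exact hinv _ _
  have h2 := hρ₂ (ρ x y) x
  rw [h] at h2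
  exact h2.symm
end

section
/- Every cocommutative rack is a Latin quandle: if (X,∗) is a rack whose dual rack is commutative, then X is idempotent and every left multiplication map L_x is a bijection. -/
/-- Every cocommutative rack is a Latin quandle.
`ρ x y` denotes `R_y⁻¹(x)`, the dual operation. -/
theorem cocomm_rack_is_latin_quandle {X : Type*} (op ρ : X → X → X)
    (hρ₁ : ∀ x y : X, op (ρ x y) y = x)
    (hρ₂ : ∀ x y : X, ρ (op x y) y = x)
    (hsd : ∀ x y z : X, op (op y z) x = op (op y x) (op z x))
    (hcocomm : ∀ x y : X, ρ x y = ρ y x) :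
    (∀ x : X, op x x = x) ∧ (∀ x : X, Function.Bijective (op x)) := by
  have inv : ∀ x y : X, op x (op x y) = y := by
    intro x y
    have h2 : ρ y (op x y) = x := (hcocomm y (op x y)).trans (hρ₂ x y)
    calc op x (op x y) = op (ρ y (op x y)) (op x y) := by rw [h2]
      _ = y := hρ₁ y (op x y)
  refine ⟨fun x => ?_, fun x => Function.Involutive.bijective (inv x)⟩
  have h2 : op (op x x) x = op (op x x) (op x x) := hsd x x x
  calc op x x = op (op x x) (op (op x x) (op x x)) := (inv _ _).symm
    _ = op (op x x) (op (op x x) x) := by rw [← h2]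
    _ = x := by rw [inv]
end

section
/- A commutative quandle (X,∗) is cocommutative if and only if it is a kei, i.e., every right multiplication map R_x is an involution: (y∗x)∗x = y for all x,y ∈ X. -/
/-- A commutative quandle is cocommutative iff it is a kei.
`ρ x y` denotes `R_y⁻¹(x)`, the dual operation. -/
theorem comm_quandle_cocomm_iff_kei {X : Type*} (op ρ : X → X → X)
    (hidem : ∀ x : X, op x x = x)
    (hρ₁ : ∀ x y : X, op (ρ x y) y = x)
    (hρ₂ : ∀ x y : X, ρ (op x y) y = x)
    (hsd : ∀ x y z : X, op (op y z) x = op (op y x) (op z x))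
    (hcomm : ∀ x y : X, op x y = op y x) :
    (∀ x y : X, ρ x y = ρ y x) ↔ (∀ x y : X, op (op y x) x = y) := by
  constructor
  · intro hco x y
    set a := ρ y x with ha
    have hax : op a x = y := hρ₁ y x
    have hay : op a y = x := by rw [ha, hco]; exact hρ₁ x y
    -- key: (y*x)*a = y*x
    have hkey : op (op y x) a = op y x := by
      rw [hsd a y x, hcomm y a, hay, hcomm x a, hax, hcomm]
    have h1 : ρ (op y x) a = op y x := by
      conv_lhs => rw [← hkey]
      exact hρ₂ (op y x) a
    have h2 : op y x = a := by
      have := hρ₁ a (op y x)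
      rw [← hco, h1, hidem] at this
      exact this
    rw [h2, hax]
  · intro hkei x y
    have h : ∀ u v : X, ρ u v = op u v := by
      intro u v
      have := hρ₂ (op u v) v
      rw [hkei v u] at this
      exact this
    rw [h, h, hcomm]
end

section
/- Let A be an abelian group and φ an automorphism of A such that the Alexander quandle Alex(A,φ) is commutative (φ(x) + y − φ(y) = φ(y) + x − φ(x) for all x,y). Then 2φ(x) = x for all x ∈ A; in particular multiplication by 2 on A is bijective, and Alex(A,φ) equals the midpoint quandle of A. -/
/-- A commutative Alexander quandle satisfies `2φ = id`; doubling is bijective,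
and the quandle operation is the midpoint operation `φ(x + y)`. -/
theorem comm_alexander_is_midpoint {A : Type*} [AddCommGroup A] (φ : A ≃+ A)
    (hcomm : ∀ x y : A, φ x + y - φ y = φ y + x - φ x) :
    (∀ x : A, φ x + φ x = x) ∧
    Function.Bijective (fun x : A => x + x) ∧
    (∀ x y : A, φ x + y - φ y = φ (x + y)) := by
  have h2 : ∀ x : A, φ x + φ x = x := by
    intro x
    have := hcomm x 0
    simp at this
    exact eq_sub_iff_add_eq.mp this
  refine ⟨h2, ?_, ?_⟩
  · exact Function.bijective_iff_has_inverse.mpr ⟨φ, fun x => by simpa using h2 x,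
      fun x => by simpa [map_add] using h2 x⟩
  · intro x y
    rw [map_add, add_sub_assoc]
    congr 1
    rw [sub_eq_iff_eq_add]
    exact (h2 y).symm
end

section
/- Let M, N be abelian groups with automorphisms φ of M and ψ of N such that id−φ and id−ψ are also automorphisms. Let f : Alex(M,φ) → Alex(N,ψ) be a quandle homomorphism (f(φ(x)+y−φ(y)) = ψ(f(x))+f(y)−ψ(f(y)) for all x,y). Then T := f − f(0) satisfies T∘φ = ψ∘T. -/
/-- If `f` is a homomorphism of Latin Alexander quandles, then `T := f − f 0`
intertwines `φ` and `ψ`. -/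
theorem alexander_hom_intertwines {M N : Type*} [AddCommGroup M] [AddCommGroup N]
    (φ : M ≃+ M) (ψ : N ≃+ N)
    (hφ : Function.Bijective (fun x : M => x - φ x))
    (hψ : Function.Bijective (fun x : N => x - ψ x))
    (f : M → N)
    (hf : ∀ x y : M, f (φ x + y - φ y) = ψ (f x) + f y - ψ (f y)) :
    ∀ x : M, f (φ x) - f 0 = ψ (f x - f 0) := by
  intro x
  have h := hf x 0
  simp [map_zero] at h
  rw [h, map_sub]
  abel
end

section
/- Let M, N be abelian groups with automorphisms φ of M and ψ of N such that id−φ and id−ψ are also bijective. Let f : Alex(M,φ) → Alex(N,ψ) be a quandle homomorphism. Then T := f − f(0) is an additive group homomorphism: T(x+y) = T(x) + T(y) for all x,y ∈ M. -/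
/-- If `f` is a homomorphism of Latin Alexander quandles, then `T := f − f 0`
is additive. -/
theorem alexander_hom_additive {M N : Type*} [AddCommGroup M] [AddCommGroup N]
    (φ : M ≃+ M) (ψ : N ≃+ N)
    (hφ : Function.Bijective (fun x : M => x - φ x))
    (hψ : Function.Bijective (fun x : N => x - ψ x))
    (f : M → N)
    (hf : ∀ x y : M, f (φ x + y - φ y) = ψ (f x) + f y - ψ (f y)) :
    ∀ x y : M, f (x + y) - f 0 = (f x - f 0) + (f y - f 0) := by
  intro x y
  obtain ⟨b, hb⟩ := hφ.2 y
  simp only at hb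
  set a := φ.symm x with ha
  have hx : φ a = x := φ.apply_symm_apply x
  have h1 : f x = ψ (f a) + f 0 - ψ (f 0) := by
    have := hf a 0
    simpa [hx] using this
  have h2 : f y = ψ (f 0) + f b - ψ (f b) := by
    have := hf 0 b
    rw [map_zero] at this
    rw [← hb]
    rw [← this]
    abel
  have h3 : f (x + y) = ψ (f a) + f b - ψ (f b) := by
    have := hf a b
    rw [hx] at this
    rw [← this]
    congr 1
    rw [← hb]; abel
  rw [h3]
  have : ψ (f a) = f x - f 0 + ψ (f 0) := by rw [h1]; abel
  rw [this, h2]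
  abel
end

section
/- Let M, N be abelian groups with automorphisms φ, ψ respectively such that id−φ and id−ψ are bijective. Every quandle homomorphism f : Alex(M,φ) → Alex(N,ψ) is an affine transformation: there exist an additive homomorphism T : M → N with T∘φ = ψ∘T and a constant c ∈ N such that f(x) = T(x) + c for all x. -/
/-- Every homomorphism of Latin Alexander quandles is an affine transformation. -/
theorem alexander_hom_is_affine {M N : Type*} [AddCommGroup M] [AddCommGroup N]
    (φ : M ≃+ M) (ψ : N ≃+ N)
    (hφ : Function.Bijective (fun x : M => x - φ x))
    (hψ : Function.Bijective (fun x : N => x - ψ x))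
    (f : M → N)
    (hf : ∀ x y : M, f (φ x + y - φ y) = ψ (f x) + f y - ψ (f y)) :
    ∃ (T : M →+ N) (c : N), (∀ x : M, T (φ x) = ψ (T x)) ∧ ∀ x : M, f x = T x + c := by
  set c := f 0 with hc
  have hφx : ∀ x : M, f (φ x) = ψ (f x) + c - ψ c := by
    intro x
    have := hf x 0
    simpa using this
  have hsy : ∀ y : M, f (y - φ y) = ψ c + f y - ψ (f y) := by
    intro y
    have := hf 0 y
    simpa [sub_eq_add_neg, add_comm, add_left_comm] using this
  have key : ∀ a b : M, f (a + b) = f a + f b - c := by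
    intro a b
    obtain ⟨y, hy⟩ := hφ.2 b
    simp only at hy
    have h1 := hf (φ.symm a) y
    have e1 : φ (φ.symm a) + y - φ y = a + b := by
      rw [φ.apply_symm_apply, add_sub_assoc, hy]
    have e2 : ψ (f (φ.symm a)) = f a - c + ψ c := by
      have h3 := hφx (φ.symm a)
      rw [φ.apply_symm_apply] at h3
      rw [h3]; abel
    have h2 := hsy y
    rw [hy] at h2
    rw [e1] at h1
    rw [h1, e2, h2]
    abel
  refine ⟨AddMonoidHom.mk' (fun x => f x - c) ?_, c, ?_, ?_⟩
  · intro a b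
    show f (a + b) - c = (f a - c) + (f b - c)
    rw [key]
    abel
  · intro x
    simp only [AddMonoidHom.mk'_apply, hφx x, map_sub]
    abel
  · intro x
    simp
end

section
/- Two midpoint quandles M_mid and N_mid over ℤ[1/2]-modules M and N are isomorphic as quandles if and only if M and N are isomorphic as ℤ[1/2]-modules. -/
local notation "R" => Localization.Away (2 : ℤ)

section MidpointAux

lemma two_isUnit_away : IsUnit (2 : R) := by
  have := IsLocalization.Away.algebraMap_isUnit (S := R) (x := (2:ℤ))
  simpa using this

lemma half_smul_two_smul {M : Type*} [AddCommGroup M] [Module R M] (x : M) :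
    (Ring.inverse (2 : R)) • ((2 : R) • x) = x := by
  rw [smul_smul, Ring.inverse_mul_cancel _ two_isUnit_away, one_smul]

lemma half_smul_inj {M : Type*} [AddCommGroup M] [Module R M] {x y : M}
    (h : (Ring.inverse (2 : R)) • x = (Ring.inverse (2 : R)) • y) : x = y := by
  have := congrArg (fun z => (2 : R) • z) h
  simpa [smul_smul, Ring.mul_inverse_cancel _ two_isUnit_away] using this

end MidpointAux

/-- Two midpoint quandles are isomorphic as quandles iff the underlying
`ℤ[1/2]`-modules are isomorphic. -/
theorem midpoint_quandle_iso_iff_module_iso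
    {M N : Type*} [AddCommGroup M] [AddCommGroup N]
    [Module (Localization.Away (2 : ℤ)) M] [Module (Localization.Away (2 : ℤ)) N]
    (opM : M → M → M)
    (hopM : ∀ x y : M, opM x y = (Ring.inverse (2 : Localization.Away (2 : ℤ))) • (x + y))
    (opN : N → N → N)
    (hopN : ∀ x y : N, opN x y = (Ring.inverse (2 : Localization.Away (2 : ℤ))) • (x + y)) :
    (∃ f : M → N, Function.Bijective f ∧ ∀ x y : M, f (opM x y) = opN (f x) (f y)) ↔
      Nonempty (M ≃ₗ[Localization.Away (2 : ℤ)] N) := by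
  set h2 : R := Ring.inverse (2 : R) with hh2
  constructor
  · rintro ⟨f, hf, hmul⟩
    set g : M → N := fun x => f x - f 0 with hg
    have hgmid : ∀ x y : M, g (h2 • (x + y)) = h2 • (g x + g y) := by
      intro x y
      have := hmul x y
      rw [hopM, hopN] at this
      simp only [hg, this]
      have h20 : h2 • (f 0 + f 0) = f 0 := by
        rw [← two_smul R (f 0), half_smul_two_smul]
      calc h2 • (f x + f y) - f 0
          = h2 • (f x + f y) - h2 • (f 0 + f 0) := by rw [h20]
        _ = h2 • ((f x - f 0) + (f y - f 0)) := by rw [← smul_sub]; congr 1; abel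
    have hghalf : ∀ x : M, g (h2 • x) = h2 • g x := by
      intro x
      have := hgmid x 0
      have hg0 : g 0 = 0 := by simp [hg]
      simpa [hg0] using this
    have hgadd : ∀ x y : M, g (x + y) = g x + g y := by
      intro x y
      apply half_smul_inj (x := g (x + y)) (y := g x + g y)
      rw [← hghalf, hgmid]
    -- package as additive hom to get ℤ-linearity
    set ga : M →+ N := AddMonoidHom.mk' g hgadd with hga
    have hz : ∀ (m : ℤ) (y : M), g ((m : R) • y) = (m : R) • g y := by
      intro m y
      rw [Int.cast_smul_eq_zsmul, Int.cast_smul_eq_zsmul]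
      exact map_zsmul ga m y
    have hgsmul : ∀ (r : R) (x : M), g (r • x) = r • g x := by
      intro r x
      obtain ⟨⟨a, s⟩, hs⟩ := IsLocalization.surj (Submonoid.powers (2 : ℤ)) r
      obtain ⟨n, hn⟩ := s.2
      have hs' : r * (((s : ℤ) : R)) = ((a : ℤ) : R) := by simpa [eq_intCast] using hs
      have hsu : IsUnit (((s : ℤ)) : R) := by
        rw [← hn]; push_cast; exact two_isUnit_away.pow n
      have key : (((s : ℤ)) : R) • g (r • x) = (((s : ℤ)) : R) • (r • g x) := by
        calc (((s : ℤ)) : R) • g (r • x)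
            = g ((((s : ℤ)) : R) • (r • x)) := (hz _ _).symm
          _ = g ((r * (((s : ℤ)) : R)) • x) := by rw [smul_smul, mul_comm]
          _ = g (((a : ℤ) : R) • x) := by rw [hs']
          _ = ((a : ℤ) : R) • g x := hz _ _
          _ = (r * (((s : ℤ)) : R)) • g x := by rw [hs']
          _ = (((s : ℤ)) : R) • (r • g x) := by rw [mul_comm, mul_smul]
      obtain ⟨u, hu⟩ := hsu
      have := congrArg (fun z => (u⁻¹ : Rˣ) • z) key
      simpa [← hu, Units.smul_def, smul_smul, ← mul_assoc, Units.inv_mul] using this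
    have hgbij : Function.Bijective g := by
      have : g = (fun y => y - f 0) ∘ f := rfl
      rw [this]
      exact (Equiv.subRight (f 0)).bijective.comp hf
    exact ⟨LinearEquiv.ofBijective
      { toFun := g, map_add' := hgadd, map_smul' := hgsmul } hgbij⟩
  · rintro ⟨e⟩
    refine ⟨e, e.bijective, fun x y => ?_⟩
    rw [hopM, hopN, map_smul, map_add]
end

section
/- Let M be a ℤ[1/2]-module and f : M_mid → M_mid a quandle endomorphism of its midpoint quandle fixing 0 (i.e., f((x+y)/2) = (f(x)+f(y))/2 and f(0) = 0). Then f is ℤ[1/2]-linear. -/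
/-- A quandle endomorphism of a midpoint quandle fixing `0` is `ℤ[1/2]`-linear. -/
theorem midpoint_endo_is_linear
    {M : Type*} [AddCommGroup M] [Module (Localization.Away (2 : ℤ)) M]
    (f : M → M)
    (hf : ∀ x y : M, f ((Ring.inverse (2 : Localization.Away (2 : ℤ))) • (x + y)) =
      (Ring.inverse (2 : Localization.Away (2 : ℤ))) • (f x + f y))
    (h0 : f 0 = 0) :
    (∀ x y : M, f (x + y) = f x + f y) ∧
    (∀ (r : Localization.Away (2 : ℤ)) (x : M), f (r • x) = r • f x) := by
  set R := Localization.Away (2 : ℤ)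
  set h : R := Ring.inverse (2 : R) with hh
  have hu : IsUnit (2 : R) := by
    have := IsLocalization.Away.algebraMap_isUnit (S := R) (2 : ℤ)
    simpa using this
  have h2 : (2 : R) * h = 1 := Ring.mul_inverse_cancel _ hu
  have cancel : ∀ a b : M, h • a = h • b → a = b := by
    intro a b hab
    have := congrArg (fun z => (2 : R) • z) hab
    simpa [smul_smul, h2] using this
  have hhalf : ∀ x : M, f (h • x) = h • f x := by
    intro x
    have := hf x 0
    simpa [h0] using this
  have hadd : ∀ x y : M, f (x + y) = f x + f y := by
    intro x y
    apply cancel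
    rw [← hhalf, hf]
  refine ⟨hadd, ?_⟩
  -- bundle f as an AddMonoidHom
  let F : M →+ M := AddMonoidHom.mk' f hadd
  have hz : ∀ (n : ℤ) (x : M), f (n • x) = n • f x := fun n x => map_zsmul F n x
  have hpow : ∀ (k : ℕ) (x : M), f (h ^ k • x) = h ^ k • f x := by
    intro k
    induction k with
    | zero => simp
    | succ n ih =>
      intro x
      rw [pow_succ, mul_comm, mul_smul, hhalf, ih, ← mul_smul, mul_comm, mul_smul]
  intro r x
  obtain ⟨⟨a, s⟩, hs⟩ := IsLocalization.surj (Submonoid.powers (2 : ℤ)) r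
  obtain ⟨k, hk⟩ := s.2
  have hsR : (algebraMap ℤ R) s = (2 : R) ^ k := by
    rw [← hk]; simp
  have hr : r = h ^ k • (algebraMap ℤ R a : R) := by
    have h2k : (2 : R) ^ k * h ^ k = 1 := by
      rw [← mul_pow, h2, one_pow]
    have : r * (2 : R) ^ k = algebraMap ℤ R a := by rw [← hsR]; exact hs
    calc r = r * ((2 : R) ^ k * h ^ k) := by rw [h2k, mul_one]
      _ = (r * (2 : R) ^ k) * h ^ k := by ring
      _ = h ^ k • (algebraMap ℤ R a) := by rw [this, smul_eq_mul, mul_comm]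
  rw [hr, smul_assoc, hpow, smul_assoc]
  congr 1
  rw [eq_intCast (algebraMap ℤ R) a, Int.cast_smul_eq_zsmul, hz,
    ← Int.cast_smul_eq_zsmul (Localization.Away (2 : ℤ)) a (f x)]
end
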